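/- Fix an integer n ≥ 1, ε ∈ ℝ, N ∈ ℝ \ {0, n}, an open interval I ⊆ ℝ, a smooth function ψ : I → ℝ, and smooth maps B, R : I → (n×n real matrices) satisfying B' + B² + R = 0 on I. Set B_ε := e^{(2(1−ε)/n)ψ}·B − (ψ*/n)·Iₙ, θ_ε := tr(B_ε), σ_ε := B_ε − (θ_ε/n)·Iₙ, and Ric_N := tr(R) + ψ'' − ψ'²/(N−n). Then θ_ε* + (1 − ε²(N−n)/N)·θ_ε²/n + (N(N−n)/n)·(ε·θ_ε/N + ψ*/(N−n))² + tr(σ_ε²) + e^{(4(1−ε)/n)ψ}·Ric_N = 0 holds on I. -/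

import Mathlib

attribute [local instance] Matrix.normedAddCommGroup Matrix.normedSpace

/-- Derivative with respect to the `ε`-proper time, scalar version:
`f* = e^{(2(1−ε)/n)ψ} · f'`. -/
noncomputable def sstar (n : ℕ) (ε : ℝ) (ψ : ℝ → ℝ) (f : ℝ → ℝ) : ℝ → ℝ :=
  fun t => Real.exp (2 * (1 - ε) / (n : ℝ) * ψ t) * deriv f t

/-- timelike weighted Raychaudhuri equation, general `N` case of
Theorem 5.7. For `N ∈ ℝ \ {0, n}`, if `B' + B² + R = 0` on the open interval `I`,
`B_ε = e^{(2(1−ε)/n)ψ}·B − (ψ*/n)·Iₙ`, `θ_ε = tr B_ε`, `σ_ε = B_ε − (θ_ε/n)·Iₙ`, and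
`Ric_N = tr R + ψ'' − ψ'²/(N−n)`, then
`θ_ε* + (1 − ε²(N−n)/N)·θ_ε²/n + (N(N−n)/n)·(ε·θ_ε/N + ψ*/(N−n))² + tr(σ_ε²)
  + e^{(4(1−ε)/n)ψ}·Ric_N = 0` on `I`. -/
theorem weighted_raychaudhuri_equation_general_N (n : ℕ) (hn : 1 ≤ n) (ε N : ℝ)
    (hN0 : N ≠ 0) (hNn : N ≠ (n : ℝ))
    (I : Set ℝ) (hIopen : IsOpen I) (hIinterval : I.OrdConnected)
    (ψ : ℝ → ℝ) (B R : ℝ → Matrix (Fin n) (Fin n) ℝ)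
    (hψ : ContDiffOn ℝ (⊤ : ℕ∞) ψ I) (hB : ContDiffOn ℝ (⊤ : ℕ∞) B I) (hR : ContDiffOn ℝ (⊤ : ℕ∞) R I)
    (hRiccati : ∀ t ∈ I, deriv B t + B t * B t + R t = 0)
    (Bε : ℝ → Matrix (Fin n) (Fin n) ℝ)
    (hBε : ∀ t, Bε t = Real.exp (2 * (1 - ε) / (n : ℝ) * ψ t) • B t
      - (sstar n ε ψ ψ t / (n : ℝ)) • (1 : Matrix (Fin n) (Fin n) ℝ))
    (θε : ℝ → ℝ) (hθε : ∀ t, θε t = (Bε t).trace)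
    (σε : ℝ → Matrix (Fin n) (Fin n) ℝ)
    (hσε : ∀ t, σε t = Bε t - (θε t / (n : ℝ)) • (1 : Matrix (Fin n) (Fin n) ℝ))
    (RicN : ℝ → ℝ)
    (hRicN : ∀ t, RicN t = (R t).trace + deriv (deriv ψ) t
      - (deriv ψ t) ^ 2 / (N - n)) :
    ∀ t ∈ I,
      sstar n ε ψ θε t
        + (1 - ε ^ 2 * (N - n) / N) * θε t ^ 2 / (n : ℝ)
        + N * (N - n) / (n : ℝ) * (ε * θε t / N + sstar n ε ψ ψ t / (N - n)) ^ 2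
        + (σε t * σε t).trace
        + Real.exp (4 * (1 - ε) / (n : ℝ) * ψ t) * RicN t = 0 := by
  intro t ht
  have hn0 : (n : ℝ) ≠ 0 := Nat.cast_ne_zero.mpr (by omega)
  have hNn' : N - (n : ℝ) ≠ 0 := sub_ne_zero.mpr hNn
  have htI : I ∈ nhds t := hIopen.mem_nhds ht
  -- smoothness facts at t
  have hψt : ContDiffAt ℝ (⊤ : ℕ∞) ψ t := hψ.contDiffAt htI
  have hψ't : ContDiffAt ℝ (⊤ : ℕ∞) (deriv ψ) t :=
    (hψ.deriv_of_isOpen hIopen (by simp)).contDiffAt htI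
  have hdψ : HasDerivAt ψ (deriv ψ t) t := (hψt.differentiableAt (by simp)).hasDerivAt
  have hdψ' : HasDerivAt (deriv ψ) (deriv (deriv ψ) t) t :=
    (hψ't.differentiableAt (by simp)).hasDerivAt
  have hdB : HasDerivAt B (deriv B t) t :=
    (((hB.contDiffAt htI)).differentiableAt (by simp)).hasDerivAt
  -- derivative of the trace of B
  have hdtr : HasDerivAt (fun s => (B s).trace) ((deriv B t).trace) t := by
    have h := (LinearMap.toContinuousLinearMap
      (Matrix.traceLinearMap (Fin n) ℝ ℝ)).hasFDerivAt.comp_hasDerivAt t hdB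
    exact h
  -- explicit formula for θε
  have hθfun : θε = fun s => Real.exp (2 * (1 - ε) / (n : ℝ) * ψ s)
      * ((B s).trace - deriv ψ s) := by
    funext s
    rw [hθε, hBε]
    simp only [sstar, Matrix.trace_sub, Matrix.trace_smul, Matrix.trace_one,
      smul_eq_mul, Fintype.card_fin]
    field_simp
  -- derivative of the exponential factor
  have hdE : HasDerivAt (fun s => Real.exp (2 * (1 - ε) / (n : ℝ) * ψ s))
      (Real.exp (2 * (1 - ε) / (n : ℝ) * ψ t) * (2 * (1 - ε) / (n : ℝ) * deriv ψ t)) t :=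
    (hdψ.const_mul (2 * (1 - ε) / (n : ℝ))).exp
  -- derivative of θε
  have hdθ : HasDerivAt θε
      (Real.exp (2 * (1 - ε) / (n : ℝ) * ψ t) * (2 * (1 - ε) / (n : ℝ) * deriv ψ t)
          * ((B t).trace - deriv ψ t)
        + Real.exp (2 * (1 - ε) / (n : ℝ) * ψ t)
          * ((deriv B t).trace - deriv (deriv ψ) t)) t := by
    rw [hθfun]
    exact hdE.mul (hdtr.sub hdψ')
  have hderivθ := hdθ.deriv
  -- trace of the Riccati equation
  have htrB' : (deriv B t).trace = -((B t * B t).trace + (R t).trace) := by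
    have h0 := congrArg Matrix.trace (hRiccati t ht)
    simp only [Matrix.trace_add, Matrix.trace_zero] at h0
    linarith
  -- trace of σε²
  have key : ∀ (x y : ℝ) (A : Matrix (Fin n) (Fin n) ℝ),
      ((x • A - y • 1) * (x • A - y • 1)).trace
        = x ^ 2 * (A * A).trace - 2 * x * y * A.trace + y ^ 2 * n := by
    intro x y A
    simp only [sub_mul, mul_sub, Matrix.smul_mul, Matrix.mul_smul, smul_smul,
      Matrix.one_mul, Matrix.mul_one, Matrix.trace_sub, Matrix.trace_smul,
      Matrix.trace_one, smul_eq_mul, Fintype.card_fin]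
    ring
  have hσform : σε t = Real.exp (2 * (1 - ε) / (n : ℝ) * ψ t) • B t
      - (sstar n ε ψ ψ t / (n : ℝ) + θε t / (n : ℝ)) • (1 : Matrix (Fin n) (Fin n) ℝ) := by
    rw [hσε, hBε, add_smul, sub_sub]
  have hσtr : (σε t * σε t).trace
      = Real.exp (2 * (1 - ε) / (n : ℝ) * ψ t) ^ 2 * (B t * B t).trace
        - 2 * Real.exp (2 * (1 - ε) / (n : ℝ) * ψ t)
          * (sstar n ε ψ ψ t / (n : ℝ) + θε t / (n : ℝ)) * (B t).trace
        + (sstar n ε ψ ψ t / (n : ℝ) + θε t / (n : ℝ)) ^ 2 * n := by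
    rw [hσform, key]
  -- the exp factor identity
  have hexp4 : Real.exp (4 * (1 - ε) / (n : ℝ) * ψ t)
      = Real.exp (2 * (1 - ε) / (n : ℝ) * ψ t)
        * Real.exp (2 * (1 - ε) / (n : ℝ) * ψ t) := by
    rw [← Real.exp_add]
    ring_nf
  have hθt : θε t = Real.exp (2 * (1 - ε) / (n : ℝ) * ψ t)
      * ((B t).trace - deriv ψ t) := by rw [hθfun]
  simp only [sstar, hσtr, hexp4, hRicN, hderivθ, htrB', hθt]
  field_simp
  ring
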